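/- arXiv:2002.10387 — 2 statements merged into one kernel-verified Lean document; each statement's English description precedes it below -/
import Mathlib

section
/- Property P₂ of B-typical sets: for every ε > 0 there exists N such that for all n ≥ N, the probability that an i.i.d. sequence U⃗ ∼ ∏_{i=1}^n p(u_i) falls outside the B-typical set is at most ε, i.e. ∑_{u⃗ ∉ B^n_{V,ε}(U)} p(u⃗) ≤ ε. -/
/-!
Write `q = margU p` and `c(u⃗) = condTypicalProb p ε u⃗` for the conditional probability that
`V⃗` is jointly typical with a given `u⃗`. Since `q(u⃗) c(u⃗) = P(U⃗ = u⃗, (U⃗, V⃗) ∈ A^n_ε(UV))`,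
the expectation of `1 - c(U⃗) ≥ 0` is the probability of joint atypicality, so by Markov's
inequality `P(c(U⃗) < 1 - ε)` is at most that probability divided by `ε`. Joint atypicality is
contained in the union of three atypicality events, for `q`, for the `V`-marginal and for `p`;
each has vanishing probability by the asymptotic equipartition property, which is the weak law
of large numbers for `-log₂ w(X)`, proved by Chebyshev's inequality.
-/

open Real
open scoped BigOperators Classical

noncomputable section

/-- Probability of a length-`n` sequence under the i.i.d. product of the pmf `p`. -/
def seqProb {α : Type*} (p : α → ℝ) {n : ℕ} (u : Fin n → α) : ℝ :=
  ∏ i, p (u i)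

/-- Entropy in bits of a pmf on a finite alphabet. -/
def ent {α : Type*} [Fintype α] (p : α → ℝ) : ℝ :=
  -∑ a, p a * logb 2 (p a)

variable {U V : Type*} [Fintype U] [Fintype V]

/-- `U`-marginal of a joint pmf on `U × V`. -/
def margU (p : U × V → ℝ) : U → ℝ := fun u => ∑ v, p (u, v)

/-- `V`-marginal of a joint pmf on `U × V`. -/
def margV (p : U × V → ℝ) : V → ℝ := fun v => ∑ u, p (u, v)

/-- Conditional pmf of `V` given `U`. -/
def condVU (p : U × V → ℝ) (u : U) (v : V) : ℝ := p (u, v) / margU p u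

/-- The weakly typical set `A^n_ε(U)` with respect to a pmf `p`. -/
def typicalSet {α : Type*} [Fintype α] (p : α → ℝ) (n : ℕ) (ε : ℝ) :
    Set (Fin n → α) :=
  {u | 0 < seqProb p u ∧ |(-(1 / (n : ℝ)) * logb 2 (seqProb p u)) - ent p| ≤ ε}

/-- The jointly typical set `A^n_ε(UV)` with respect to a joint pmf `p`. -/
def jointTypicalSet (p : U × V → ℝ) (n : ℕ) (ε : ℝ) :
    Set ((Fin n → U) × (Fin n → V)) :=
  {uv | 0 < seqProb (margU p) uv.1 ∧ 0 < seqProb (margV p) uv.2 ∧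
    0 < seqProb p (fun i => (uv.1 i, uv.2 i)) ∧
    |(-(1 / (n : ℝ)) * logb 2 (seqProb (margU p) uv.1)) - ent (margU p)| ≤ ε ∧
    |(-(1 / (n : ℝ)) * logb 2 (seqProb (margV p) uv.2)) - ent (margV p)| ≤ ε ∧
    |(-(1 / (n : ℝ)) * logb 2 (seqProb p (fun i => (uv.1 i, uv.2 i)))) - ent p| ≤ ε}

/-- The B-typical set `B^n_{V,ε}(U)`. -/
def BtypicalSet (p : U × V → ℝ) (n : ℕ) (ε : ℝ) : Set (Fin n → U) :=
  {u | u ∈ typicalSet (margU p) n ε ∧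
    1 - ε ≤ ∑ v : Fin n → V,
      if (u, v) ∈ jointTypicalSet p n ε then ∏ i, condVU p (u i) (v i) else 0}

open Filter Topology Finset

set_option linter.unusedSectionVars false

def iidProb {β : Type*} [Fintype β] (w : β → ℝ) {n : ℕ} (S : Set (Fin n → β)) : ℝ :=
  ∑ x, if x ∈ S then seqProb w x else 0

lemma seqProb_nonneg {β : Type*} {w : β → ℝ} (hw0 : ∀ a, 0 ≤ w a) {n : ℕ} (x : Fin n → β) :
    0 ≤ seqProb w x :=
  prod_nonneg fun i _ => hw0 (x i)

section IidProb

variable {β : Type*} [Fintype β] {w : β → ℝ} {n : ℕ}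

lemma sum_seqProb_mul_prod (hw1 : ∑ a, w a = 1) (s : Finset (Fin n)) (g : β → ℝ) :
    ∑ x : Fin n → β, seqProb w x * ∏ i ∈ s, g (x i) = (∑ a, w a * g a) ^ s.card := by
  have hfactor : ∀ x : Fin n → β, seqProb w x * ∏ i ∈ s, g (x i)
      = ∏ i, w (x i) * (if i ∈ s then g (x i) else 1) := by
    intro x
    rw [prod_mul_distrib, prod_ite_mem, univ_inter, seqProb]
  have hsum : ∀ i : Fin n, ∑ a, w a * (if i ∈ s then g a else 1)
      = if i ∈ s then ∑ a, w a * g a else 1 := by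
    intro i; split_ifs <;> simp [hw1]
  simp_rw [hfactor]
  rw [← Fintype.prod_sum (fun i a => w a * if i ∈ s then g a else 1)]
  simp_rw [hsum, prod_ite_mem, univ_inter, prod_const]

lemma iidProb_nonneg (hw0 : ∀ a, 0 ≤ w a) (S : Set (Fin n → β)) : 0 ≤ iidProb w S :=
  sum_nonneg fun x _ => by split_ifs <;> simp [seqProb_nonneg hw0]

lemma iidProb_mono_of_pos (hw0 : ∀ a, 0 ≤ w a) {S T : Set (Fin n → β)}
    (h : ∀ x ∈ S, 0 < seqProb w x → x ∈ T) : iidProb w S ≤ iidProb w T := by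
  refine sum_le_sum fun x _ => ?_
  by_cases hS : x ∈ S
  · rcases (seqProb_nonneg hw0 x).eq_or_lt with h0 | hpos
    · simp [← h0]
    · simp [hS, h x hS hpos]
  · simp [hS, apply_ite, seqProb_nonneg hw0]

lemma iidProb_mono (hw0 : ∀ a, 0 ≤ w a) {S T : Set (Fin n → β)} (h : S ⊆ T) :
    iidProb w S ≤ iidProb w T :=
  iidProb_mono_of_pos hw0 fun _ hx _ => h hx

lemma iidProb_union_le (hw0 : ∀ a, 0 ≤ w a) (S T : Set (Fin n → β)) :
    iidProb w (S ∪ T) ≤ iidProb w S + iidProb w T := by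
  rw [iidProb, iidProb, iidProb, ← sum_add_distrib]
  refine sum_le_sum fun x _ => ?_
  have := seqProb_nonneg hw0 x
  by_cases hS : x ∈ S <;> by_cases hT : x ∈ T <;> simp [hS, hT, this]

lemma iidProb_ge_le_sum_mul_div (hw0 : ∀ a, 0 ≤ w a) {F : (Fin n → β) → ℝ} (hF : ∀ x, 0 ≤ F x)
    {t : ℝ} (ht : 0 < t) :
    iidProb w {x | t ≤ F x} ≤ (∑ x, seqProb w x * F x) / t := by
  rw [le_div_iff₀ ht, iidProb, sum_mul]
  refine sum_le_sum fun x _ => ?_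
  have := seqProb_nonneg hw0 x
  split_ifs with h
  · exact mul_le_mul_of_nonneg_left h this
  · simpa using mul_nonneg this (hF x)

lemma sum_seqProb_mul_sq_sum (hw1 : ∑ a, w a = 1) {g : β → ℝ} (hg : ∑ a, w a * g a = 0) :
    ∑ x : Fin n → β, seqProb w x * (∑ i, g (x i)) ^ 2 = n * ∑ a, w a * g a ^ 2 := by
  have hpair : ∀ i j : Fin n, ∑ x : Fin n → β, seqProb w x * (g (x i) * g (x j))
      = if i = j then ∑ a, w a * g a ^ 2 else 0 := by
    intro i j
    split_ifs with hij
    · subst hij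
      simpa [← sq] using sum_seqProb_mul_prod hw1 {i} (fun a => g a ^ 2)
    · simpa [prod_pair hij, card_pair hij, hg] using sum_seqProb_mul_prod hw1 {i, j} g
  calc ∑ x : Fin n → β, seqProb w x * (∑ i, g (x i)) ^ 2
      = ∑ i, ∑ j, ∑ x : Fin n → β, seqProb w x * (g (x i) * g (x j)) := by
        simp_rw [sq, sum_mul_sum, mul_sum]
        rw [sum_comm]
        exact sum_congr rfl fun i _ => sum_comm
    _ = n * ∑ a, w a * g a ^ 2 := by simp [hpair]

lemma iidProb_deviation_le (hw0 : ∀ a, 0 ≤ w a) (hw1 : ∑ a, w a = 1) (f : β → ℝ)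
    (hn : 0 < n) {t : ℝ} (ht : 0 < t) :
    iidProb w {x : Fin n → β | t < |(∑ i, f (x i)) / n - ∑ a, w a * f a|}
      ≤ (∑ a, w a * (f a - ∑ b, w b * f b) ^ 2) / (n * t ^ 2) := by
  set μ := ∑ a, w a * f a
  have hnR : (0 : ℝ) < n := Nat.cast_pos.mpr hn
  have hcentered : ∑ a, w a * (f a - μ) = 0 := by
    simp [mul_sub, sum_sub_distrib, ← sum_mul, hw1, μ]
  have hsub : {x : Fin n → β | t < |(∑ i, f (x i)) / n - μ|}
      ⊆ {x | (n * t) ^ 2 ≤ (∑ i, (f (x i) - μ)) ^ 2} := by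
    intro x hx
    have hsum : ∑ i, (f (x i) - μ) = n * ((∑ i, f (x i)) / n - μ) := by
      rw [sum_sub_distrib, sum_const, card_univ, Fintype.card_fin, nsmul_eq_mul]
      field_simp
    rw [Set.mem_ofPred_eq, hsum, sq_le_sq, abs_mul, abs_mul, abs_of_pos hnR, abs_of_pos ht]
    exact mul_le_mul_of_nonneg_left hx.le hnR.le
  calc iidProb w {x : Fin n → β | t < |(∑ i, f (x i)) / n - μ|}
      ≤ iidProb w {x | (n * t) ^ 2 ≤ (∑ i, (f (x i) - μ)) ^ 2} := iidProb_mono hw0 hsub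
    _ ≤ (∑ x : Fin n → β, seqProb w x * (∑ i, (f (x i) - μ)) ^ 2) / (n * t) ^ 2 :=
        iidProb_ge_le_sum_mul_div hw0 (fun x => sq_nonneg _) (by positivity)
    _ = (∑ a, w a * (f a - μ) ^ 2) / (n * t ^ 2) := by
        rw [sum_seqProb_mul_sq_sum hw1 hcentered]
        field_simp

lemma tendsto_iidProb_deviation (hw0 : ∀ a, 0 ≤ w a) (hw1 : ∑ a, w a = 1) (f : β → ℝ)
    {t : ℝ} (ht : 0 < t) :
    Tendsto (fun n => iidProb w {x : Fin n → β | t < |(∑ i, f (x i)) / n - ∑ a, w a * f a|})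
      atTop (𝓝 0) := by
  refine squeeze_zero' (Eventually.of_forall fun n => iidProb_nonneg hw0 _) ?_
    (tendsto_const_div_atTop_nhds_zero_nat ((∑ a, w a * (f a - ∑ b, w b * f b) ^ 2) / t ^ 2))
  filter_upwards [eventually_gt_atTop 0] with n hn
  refine (iidProb_deviation_le hw0 hw1 f hn ht).trans_eq ?_
  rw [div_div, mul_comm]

lemma neg_logb_seqProb_div_sub_ent {x : Fin n → β} (hx : 0 < seqProb w x) :
    -(1 / (n : ℝ)) * logb 2 (seqProb w x) - ent w
      = (∑ i, -logb 2 (w (x i))) / n - ∑ a, w a * -logb 2 (w a) := by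
  have hne : ∀ i, w (x i) ≠ 0 := fun i h0 =>
    hx.ne' (prod_eq_zero (mem_univ i) h0)
  rw [seqProb, Real.logb_prod _ _ fun i _ => hne i, ent]
  simp only [sum_neg_distrib, mul_neg]
  ring

lemma tendsto_iidProb_compl_typicalSet (hw0 : ∀ a, 0 ≤ w a) (hw1 : ∑ a, w a = 1)
    {ε : ℝ} (hε : 0 < ε) :
    Tendsto (fun n => iidProb w (typicalSet w n ε)ᶜ) atTop (𝓝 0) := by
  refine squeeze_zero (fun n => iidProb_nonneg hw0 _)
    (fun n => iidProb_mono_of_pos hw0 fun x hx hpos => ?_)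
    (tendsto_iidProb_deviation hw0 hw1 (fun a => -logb 2 (w a)) hε)
  rw [Set.mem_ofPred_eq, ← neg_logb_seqProb_div_sub_ent hpos]
  exact lt_of_not_ge fun hle => hx ⟨hpos, hle⟩

end IidProb

lemma margU_nonneg {p : U × V → ℝ} (hp0 : ∀ x, 0 ≤ p x) (a : U) : 0 ≤ margU p a :=
  sum_nonneg fun b _ => hp0 (a, b)

lemma margV_nonneg {p : U × V → ℝ} (hp0 : ∀ x, 0 ≤ p x) (b : V) : 0 ≤ margV p b :=
  sum_nonneg fun a _ => hp0 (a, b)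

section Joint

variable {n : ℕ} (p : U × V → ℝ)

lemma sum_margU : ∑ a, margU p a = ∑ x, p x := (Fintype.sum_prod_type p).symm

lemma sum_margV : ∑ b, margV p b = ∑ x, p x := (Fintype.sum_prod_type_right p).symm

lemma sum_seqProb_zip_right (u : Fin n → U) :
    ∑ v : Fin n → V, seqProb p (fun i => (u i, v i)) = seqProb (margU p) u :=
  (Fintype.prod_sum fun i b => p (u i, b)).symm

lemma sum_seqProb_zip_left (v : Fin n → V) :
    ∑ u : Fin n → U, seqProb p (fun i => (u i, v i)) = seqProb (margV p) v :=
  (Fintype.prod_sum fun i a => p (a, v i)).symm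

lemma sum_sum_eq_sum_unzip (F : (Fin n → U) → (Fin n → V) → ℝ) :
    ∑ u, ∑ v, F u v = ∑ x : Fin n → U × V, F (fun i => (x i).1) (fun i => (x i).2) :=
  (Fintype.sum_prod_type' F).symm.trans
    (Equiv.sum_comp (Equiv.arrowProdEquivProdArrow _ _ _) fun uv => F uv.1 uv.2).symm

lemma iidProb_preimage_fst (S : Set (Fin n → U)) :
    iidProb p {x | (fun i => (x i).1) ∈ S} = iidProb (margU p) S := by
  simp only [iidProb, Set.mem_ofPred_eq]
  rw [← sum_sum_eq_sum_unzip (fun u v => if u ∈ S then seqProb p (fun i => (u i, v i)) else 0)]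
  simp_rw [sum_ite_irrel, sum_const_zero, sum_seqProb_zip_right]

lemma iidProb_preimage_snd (S : Set (Fin n → V)) :
    iidProb p {x | (fun i => (x i).2) ∈ S} = iidProb (margV p) S := by
  simp only [iidProb, Set.mem_ofPred_eq]
  rw [← sum_sum_eq_sum_unzip (fun u v => if v ∈ S then seqProb p (fun i => (u i, v i)) else 0),
    sum_comm]
  simp_rw [sum_ite_irrel, sum_const_zero, sum_seqProb_zip_left]

lemma mem_jointTypicalSet_iff {ε : ℝ} {u : Fin n → U} {v : Fin n → V} :
    (u, v) ∈ jointTypicalSet p n ε ↔ u ∈ typicalSet (margU p) n ε ∧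
      v ∈ typicalSet (margV p) n ε ∧ (fun i => (u i, v i)) ∈ typicalSet p n ε := by
  simp only [jointTypicalSet, typicalSet, Set.mem_ofPred_eq]
  tauto

lemma iidProb_notMem_jointTypicalSet_le (hp0 : ∀ x, 0 ≤ p x) (ε : ℝ) :
    iidProb p {x : Fin n → U × V |
        ((fun i => (x i).1), (fun i => (x i).2)) ∉ jointTypicalSet p n ε}
      ≤ iidProb (margU p) (typicalSet (margU p) n ε)ᶜ
        + iidProb (margV p) (typicalSet (margV p) n ε)ᶜ + iidProb p (typicalSet p n ε)ᶜ := by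
  rw [← iidProb_preimage_fst, ← iidProb_preimage_snd]
  refine (iidProb_mono hp0 fun x hx => ?_).trans
    ((iidProb_union_le hp0 _ _).trans (add_le_add_left (iidProb_union_le hp0 _ _) _))
  rw [Set.mem_ofPred_eq, mem_jointTypicalSet_iff] at hx
  simp only [Set.mem_union, Set.mem_ofPred_eq, Set.mem_compl_iff]
  tauto

lemma tendsto_iidProb_notMem_jointTypicalSet (hp0 : ∀ x, 0 ≤ p x) (hp1 : ∑ x, p x = 1)
    {ε : ℝ} (hε : 0 < ε) :
    Tendsto (fun n => iidProb p {x : Fin n → U × V |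
        ((fun i => (x i).1), (fun i => (x i).2)) ∉ jointTypicalSet p n ε}) atTop (𝓝 0) := by
  have hU := tendsto_iidProb_compl_typicalSet (margU_nonneg hp0)
    ((sum_margU p).trans hp1) hε
  have hV := tendsto_iidProb_compl_typicalSet (margV_nonneg hp0)
    ((sum_margV p).trans hp1) hε
  have hUV := tendsto_iidProb_compl_typicalSet hp0 hp1 hε
  exact squeeze_zero (fun n => iidProb_nonneg hp0 _)
    (fun n => iidProb_notMem_jointTypicalSet_le p hp0 ε) (by simpa using (hU.add hV).add hUV)

end Joint

def condTypicalProb (p : U × V → ℝ) {n : ℕ} (ε : ℝ) (u : Fin n → U) : ℝ :=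
  ∑ v : Fin n → V, if (u, v) ∈ jointTypicalSet p n ε then ∏ i, condVU p (u i) (v i) else 0

section BTypical

variable {n : ℕ} {p : U × V → ℝ}

lemma condVU_nonneg (hp0 : ∀ x, 0 ≤ p x) (a : U) (b : V) : 0 ≤ condVU p a b :=
  div_nonneg (hp0 (a, b)) (margU_nonneg hp0 a)

lemma sum_condVU_le_one (a : U) : ∑ b, condVU p a b ≤ 1 := by
  simp only [condVU, ← sum_div]
  exact div_self_le_one _

lemma condTypicalProb_le_one (hp0 : ∀ x, 0 ≤ p x) (ε : ℝ) (u : Fin n → U) :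
    condTypicalProb p ε u ≤ 1 :=
  calc condTypicalProb p ε u ≤ ∑ v : Fin n → V, ∏ i, condVU p (u i) (v i) :=
        sum_le_sum fun v _ => by
          split_ifs
          exacts [le_rfl, prod_nonneg fun i _ => condVU_nonneg hp0 _ _]
    _ = ∏ i, ∑ b, condVU p (u i) b := (Fintype.prod_sum fun i b => condVU p (u i) b).symm
    _ ≤ 1 := prod_le_one (fun i _ => sum_nonneg fun b _ => condVU_nonneg hp0 _ _)
        fun i _ => sum_condVU_le_one (u i)

lemma seqProb_margU_mul_condTypicalProb (ε : ℝ) (u : Fin n → U) :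
    seqProb (margU p) u * condTypicalProb p ε u
      = ∑ v, if (u, v) ∈ jointTypicalSet p n ε then seqProb p (fun i => (u i, v i)) else 0 := by
  rw [condTypicalProb, mul_sum]
  refine sum_congr rfl fun v _ => ?_
  split_ifs with h
  · have hne : ∀ i, margU p (u i) ≠ 0 := fun i h0 =>
      h.1.ne' (prod_eq_zero (mem_univ i) h0)
    rw [seqProb, seqProb, ← prod_mul_distrib]
    exact prod_congr rfl fun i _ => mul_div_cancel₀ _ (hne i)
  · exact mul_zero _

lemma sum_seqProb_margU_mul_one_sub_condTypicalProb (ε : ℝ) :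
    ∑ u : Fin n → U, seqProb (margU p) u * (1 - condTypicalProb p ε u)
      = iidProb p {x : Fin n → U × V |
          ((fun i => (x i).1), (fun i => (x i).2)) ∉ jointTypicalSet p n ε} := by
  have hpoint : ∀ u : Fin n → U, seqProb (margU p) u * (1 - condTypicalProb p ε u)
      = ∑ v, if (u, v) ∉ jointTypicalSet p n ε then seqProb p (fun i => (u i, v i)) else 0 := by
    intro u
    rw [mul_one_sub, seqProb_margU_mul_condTypicalProb, ← sum_seqProb_zip_right p,
      ← sum_sub_distrib]
    exact sum_congr rfl fun v _ => by split_ifs <;> simp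
  simp only [hpoint, iidProb, Set.mem_ofPred_eq]
  exact (sum_sum_eq_sum_unzip _).trans (by congr!)

lemma iidProb_compl_BtypicalSet_le (hp0 : ∀ x, 0 ≤ p x) {ε : ℝ} (hε : 0 < ε) :
    iidProb (margU p) (BtypicalSet p n ε)ᶜ
      ≤ iidProb (margU p) (typicalSet (margU p) n ε)ᶜ
        + iidProb p {x : Fin n → U × V |
            ((fun i => (x i).1), (fun i => (x i).2)) ∉ jointTypicalSet p n ε} / ε := by
  have hq0 := margU_nonneg hp0
  have hsub : (BtypicalSet p n ε)ᶜ
      ⊆ (typicalSet (margU p) n ε)ᶜ ∪ {u | ε ≤ 1 - condTypicalProb p ε u} := by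
    intro u hu
    by_cases hT : u ∈ typicalSet (margU p) n ε
    · have hlt : condTypicalProb p ε u < 1 - ε := lt_of_not_ge fun h => hu ⟨hT, h⟩
      exact Or.inr (show ε ≤ 1 - condTypicalProb p ε u by linarith)
    · exact Or.inl hT
  calc iidProb (margU p) (BtypicalSet p n ε)ᶜ
      ≤ iidProb (margU p) ((typicalSet (margU p) n ε)ᶜ ∪ {u | ε ≤ 1 - condTypicalProb p ε u}) :=
        iidProb_mono hq0 hsub
    _ ≤ _ := iidProb_union_le hq0 _ _
    _ ≤ _ := by
        refine add_le_add le_rfl ((iidProb_ge_le_sum_mul_div hq0 (fun u => ?_) hε).trans_eq ?_)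
        · linarith [condTypicalProb_le_one hp0 ε u]
        · rw [sum_seqProb_margU_mul_one_sub_condTypicalProb]

end BTypical

/-- **Property P₂ of B-typical sets**: for every `ε > 0` there exists `N` such that
for all `n ≥ N`, the probability that an i.i.d. sequence falls outside the B-typical
set is at most `ε`. -/
theorem B_typical_high_probability
    (p : U × V → ℝ) (hp0 : ∀ x, 0 ≤ p x) (hp1 : ∑ x, p x = 1)
    (ε : ℝ) (hε : 0 < ε) :
    ∃ N : ℕ, ∀ n : ℕ, N ≤ n →
      (∑ u : Fin n → U,
        if u ∉ BtypicalSet p n ε then seqProb (margU p) u else 0) ≤ ε := by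
  have hq0 := margU_nonneg hp0
  have hbound := (tendsto_iidProb_compl_typicalSet hq0 ((sum_margU p).trans hp1) hε).add
    ((tendsto_iidProb_notMem_jointTypicalSet p hp0 hp1 hε).div_const ε)
  rw [zero_div, add_zero] at hbound
  have hlim : Tendsto (fun n => iidProb (margU p) (BtypicalSet p n ε)ᶜ) atTop (𝓝 0) :=
    squeeze_zero (fun n => iidProb_nonneg hq0 _)
      (fun n => iidProb_compl_BtypicalSet_le hp0 hε) hbound
  obtain ⟨N, hN⟩ := eventually_atTop.mp (hlim.eventually (ge_mem_nhds hε))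
  refine ⟨N, fun n hn => (hN n hn).trans_eq' ?_⟩
  rw [iidProb]
  congr!
end
end

section
/- Second error event bound in the proof of Theorem 1: for every ε > 0 there exists N such that for all n ≥ N the average (over a uniformly random sign codebook) probability that some other codeword is jointly typical with the channel output is bounded as ∑_{a⃗ ∈ 𝔅} (1/|𝔅|) ∑_{s⃗ ∈ 𝒮ⁿ} 2^{−n} ∑_{y⃗ ∈ 𝒴ⁿ} p(y⃗ | (s⃗,a⃗)) ∑_{ã⃗ ∈ 𝔅, ã⃗ ≠ a⃗} ∑_{s̃⃗ ∈ 𝒮ⁿ} 2^{−n}·1[(ã⃗, s̃⃗, y⃗) ∈ A^n_ε(ASY)] ≤ 2^{n(H(A) − I(X;Y) + 10ε)}, where 𝔅 = B^n_{(S,Y),ε}(A), p(y⃗|(s⃗,a⃗)) = ∏_{i=1}^n p(y_i|(s_i,a_i)), and 1[·] is the indicator function. -/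
open Real
open scoped BigOperators Classical

noncomputable section

/-- The sign alphabet `𝒮 = {-1, +1}`. -/
inductive Sign : Type
  | neg  -- the sign `-1`
  | pos  -- the sign `+1`
  deriving DecidableEq

instance : Fintype Sign :=
  ⟨{Sign.neg, Sign.pos}, fun x => by cases x <;> simp⟩

variable {U V : Type*} [Fintype U] [Fintype V]

variable {A Y : Type*} [Fintype A] [Fintype Y]

/-- Input pmf `p(x) = p(s,a) = (1/2)·p(a)` : uniform sign, independent amplitude. -/
def inputPMF (p : A → ℝ) : Sign × A → ℝ := fun x => p x.2 / 2

/-- Output pmf `p(y) = ∑_x p(x)·p(y|x)`. -/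
def outputPMF (W : Sign × A → Y → ℝ) (p : A → ℝ) : Y → ℝ :=
  fun y => ∑ x : Sign × A, inputPMF p x * W x y

/-- Mutual information `I(X;Y)` in bits, with `X = (S,A)`. -/
def mutualInfo (W : Sign × A → Y → ℝ) (p : A → ℝ) : ℝ :=
  ∑ x : Sign × A, ∑ y : Y,
    inputPMF p x * W x y * logb 2 (W x y / outputPMF W p y)

/-- Uniform pmf of the sign `S`. -/
def signPMF : Sign → ℝ := fun _ => 1 / 2

/-- Joint pmf `p(a,s,y) = p(a)·(1/2)·p(y|(s,a))` on `A × Sign × Y`. -/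
def jointASY (W : Sign × A → Y → ℝ) (p : A → ℝ) : A × Sign × Y → ℝ :=
  fun z => p z.1 * (1 / 2 : ℝ) * W (z.2.1, z.1) z.2.2

/-- Joint pmf of the pair `(A, (S,Y))`, pairing `A` with the composite `(S,Y)`. -/
def pairASY (W : Sign × A → Y → ℝ) (p : A → ℝ) : A × (Sign × Y) → ℝ :=
  fun z => p z.1 * (1 / 2 : ℝ) * W (z.2.1, z.1) z.2.2

/-- The jointly typical set `A^n_ε(ASY)` of triples of length-`n` sequences: the
empirical log-probability rate of each single coordinate process (`A`, `S` and `Y`)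
and of the full joint process is within `ε` of the corresponding entropy. -/
def tripleTypicalSet (W : Sign × A → Y → ℝ) (p : A → ℝ) (n : ℕ) (ε : ℝ) :
    Set ((Fin n → A) × (Fin n → Sign) × (Fin n → Y)) :=
  {asy | 0 < seqProb p asy.1 ∧ 0 < seqProb signPMF asy.2.1 ∧
    0 < seqProb (outputPMF W p) asy.2.2 ∧
    0 < seqProb (jointASY W p) (fun i => (asy.1 i, asy.2.1 i, asy.2.2 i)) ∧
    |(-(1 / (n : ℝ)) * logb 2 (seqProb p asy.1)) - ent p| ≤ ε ∧
    |(-(1 / (n : ℝ)) * logb 2 (seqProb signPMF asy.2.1)) - ent signPMF| ≤ ε ∧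
    |(-(1 / (n : ℝ)) * logb 2 (seqProb (outputPMF W p) asy.2.2)) - ent (outputPMF W p)| ≤ ε ∧
    |(-(1 / (n : ℝ)) *
        logb 2 (seqProb (jointASY W p) (fun i => (asy.1 i, asy.2.1 i, asy.2.2 i)))) -
      ent (jointASY W p)| ≤ ε}

/-!
Fix an output sequence `y⃗`. Every pair `(ã⃗, s̃⃗)` with `(ã⃗, s̃⃗, y⃗)` jointly typical has
probability at least `2^{-n(H(ASY)+ε)}`, and these probabilities sum to at most
`p(y⃗) ≤ 2^{-n(H(Y)-ε)}`, so there are at most `2^{n(H(ASY)-H(Y)+2ε)}` such pairs. Hence the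
innermost double sum is at most `2^{-n}·2^{n(H(ASY)-H(Y)+2ε)}`, whatever the transmitted
codeword and the output, and averaging over codewords, signs and outputs keeps this bound.
Finally `H(ASY) - H(Y) - 1 = H(A) - I(X;Y)`, because the uniform independent sign makes
`H(X) = H(A) + 1`.
-/

section Entropy

variable {α β : Type*} [Fintype α] [Fintype β]

lemma ent_comp_equiv (e : β ≃ α) (f : α → ℝ) : ent (f ∘ e) = ent f := by
  simp only [ent, Function.comp_apply, Equiv.sum_comp e (fun a => f a * logb 2 (f a))]

lemma ent_mul (f : α → ℝ) (g : β → ℝ) :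
    ent (fun x : α × β => f x.1 * g x.2) = ent f * ∑ b, g b + (∑ a, f a) * ent g := by
  have hterm : ∀ a b, f a * g b * logb 2 (f a * g b) =
      f a * logb 2 (f a) * g b + f a * (g b * logb 2 (g b)) := by
    intro a b
    by_cases ha : f a = 0
    · simp [ha]
    by_cases hb : g b = 0
    · simp [hb]
    rw [logb_mul ha hb]
    ring
  simp only [ent, Fintype.sum_prod_type, hterm, Finset.sum_add_distrib, ← Finset.mul_sum,
    ← Finset.sum_mul]
  ring

/-- `I(X;Y) = H(X) + H(Y) - H(X,Y)` for an input pmf `px` and a channel `W`. -/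
lemma sum_mul_logb_div_eq_ent_add_ent_sub_ent (px : α → ℝ) (W : α → β → ℝ)
    (hpx : ∀ x, 0 ≤ px x) (hW0 : ∀ x y, 0 ≤ W x y) (hW1 : ∀ x, ∑ y, W x y = 1) :
    ∑ x, ∑ y, px x * W x y * logb 2 (W x y / ∑ x', px x' * W x' y) =
      ent px + ent (fun y => ∑ x, px x * W x y) -
        ent (fun xy : α × β => px xy.1 * W xy.1 xy.2) := by
  set py := fun y => ∑ x, px x * W x y with hpy
  change ∑ x, ∑ y, px x * W x y * logb 2 (W x y / py y) = ent px + ent py - _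
  have hterm : ∀ x y, px x * W x y * logb 2 (W x y / py y) =
      px x * W x y * logb 2 (px x * W x y) - W x y * (px x * logb 2 (px x)) -
        px x * W x y * logb 2 (py y) := by
    intro x y
    by_cases hx : px x = 0
    · simp [hx]
    by_cases hy : W x y = 0
    · simp [hy]
    have hpy_pos : 0 < py y :=
      (mul_pos ((hpx x).lt_of_ne' hx) ((hW0 x y).lt_of_ne' hy)).trans_le
        (Finset.single_le_sum (fun x' _ => mul_nonneg (hpx x') (hW0 x' y)) (Finset.mem_univ x))
    rw [logb_div hy hpy_pos.ne', logb_mul hx hy]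
    ring
  have hX : ∑ x, ∑ y, W x y * (px x * logb 2 (px x)) = ∑ x, px x * logb 2 (px x) := by
    simp only [← Finset.sum_mul, hW1, one_mul]
  have hY : ∑ x, ∑ y, px x * W x y * logb 2 (py y) = ∑ y, py y * logb 2 (py y) := by
    rw [Finset.sum_comm]
    simp only [← Finset.sum_mul, hpy]
  simp only [hterm, Finset.sum_sub_distrib, hX, hY, ent, Fintype.sum_prod_type]
  ring

end Entropy

section Channel

variable {A Y : Type*} [Fintype A]

lemma card_sign : Fintype.card Sign = 2 := rfl

lemma sum_signPMF : ∑ s, signPMF s = 1 := by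
  simp only [signPMF, Finset.sum_const, Finset.card_univ, card_sign]
  norm_num

lemma ent_signPMF : ent signPMF = 1 := by
  simp only [ent, signPMF, Finset.sum_const, Finset.card_univ, card_sign, one_div, logb_inv,
    logb_self_eq_one one_lt_two]
  norm_num

lemma ent_inputPMF {p : A → ℝ} (hp1 : ∑ a, p a = 1) : ent (inputPMF p) = ent p + 1 := by
  have hprod : inputPMF p = fun x => signPMF x.1 * p x.2 := by
    funext x
    simp only [inputPMF, signPMF]
    ring
  rw [hprod, ent_mul, ent_signPMF, hp1, sum_signPMF]
  ring

lemma ent_jointASY [Fintype Y] (W : Sign × A → Y → ℝ) (p : A → ℝ) :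
    ent (jointASY W p) = ent (fun xy : (Sign × A) × Y => inputPMF p xy.1 * W xy.1 xy.2) := by
  let e : A × Sign × Y ≃ (Sign × A) × Y :=
    (Equiv.prodAssoc A Sign Y).symm.trans ((Equiv.prodComm A Sign).prodCongr (Equiv.refl Y))
  rw [← ent_comp_equiv e]
  congr 1
  funext z
  simp only [jointASY, inputPMF, Function.comp_apply, e, Equiv.trans_apply,
    Equiv.prodAssoc_symm_apply, Equiv.prodCongr_apply, Prod.map, Equiv.prodComm_apply,
    Prod.swap, Equiv.refl_apply]
  ring

lemma mutualInfo_eq [Fintype Y] {W : Sign × A → Y → ℝ} (hW0 : ∀ x y, 0 ≤ W x y)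
    (hW1 : ∀ x, ∑ y, W x y = 1) {p : A → ℝ} (hp0 : ∀ a, 0 ≤ p a) (hp1 : ∑ a, p a = 1) :
    mutualInfo W p = ent p + 1 + ent (outputPMF W p) - ent (jointASY W p) := by
  rw [mutualInfo, ent_jointASY, ← ent_inputPMF hp1]
  exact sum_mul_logb_div_eq_ent_add_ent_sub_ent _ W (fun x => div_nonneg (hp0 x.2) two_pos.le)
    hW0 hW1

lemma sum_jointASY_eq_outputPMF (W : Sign × A → Y → ℝ) (p : A → ℝ) (y : Y) :
    ∑ a, ∑ s, jointASY W p (a, s, y) = outputPMF W p y := by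
  rw [outputPMF, Fintype.sum_prod_type, Finset.sum_comm]
  simp only [jointASY, inputPMF]
  ring_nf

lemma sum_sum_seqProb_jointASY (W : Sign × A → Y → ℝ) (p : A → ℝ) {n : ℕ} (y : Fin n → Y) :
    ∑ a : Fin n → A, ∑ s : Fin n → Sign, seqProb (jointASY W p) (fun i => (a i, s i, y i)) =
      seqProb (outputPMF W p) y := by
  simp only [seqProb, ← sum_jointASY_eq_outputPMF]
  rw [Fintype.prod_sum]
  refine Finset.sum_congr rfl fun a _ => ?_
  exact (Fintype.prod_sum fun i σ => jointASY W p (a i, σ, y i)).symm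

end Channel

section Typicality

variable {n : ℕ} {x H ε : ℝ}

lemma logb_mem_Icc_of_abs_rate_sub_le (hn : 0 < n)
    (h : |-(1 / (n : ℝ)) * logb 2 x - H| ≤ ε) :
    -(n : ℝ) * (H + ε) ≤ logb 2 x ∧ logb 2 x ≤ -(n : ℝ) * (H - ε) := by
  have hn' : (0 : ℝ) < n := Nat.cast_pos.mpr hn
  have hrate : -(1 / (n : ℝ)) * logb 2 x * n = -logb 2 x := by
    field_simp
  obtain ⟨hlo, hhi⟩ := abs_le.mp h
  constructor <;> nlinarith

lemma two_rpow_le_of_abs_rate_sub_le (hn : 0 < n) (hx : 0 < x)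
    (h : |-(1 / (n : ℝ)) * logb 2 x - H| ≤ ε) : (2 : ℝ) ^ (-(n : ℝ) * (H + ε)) ≤ x := by
  rw [← rpow_logb two_pos (by norm_num) hx]
  exact rpow_le_rpow_of_exponent_le one_le_two (logb_mem_Icc_of_abs_rate_sub_le hn h).1

lemma le_two_rpow_of_abs_rate_sub_le (hn : 0 < n) (hx : 0 < x)
    (h : |-(1 / (n : ℝ)) * logb 2 x - H| ≤ ε) : x ≤ (2 : ℝ) ^ (-(n : ℝ) * (H - ε)) := by
  rw [← rpow_logb two_pos (by norm_num) hx]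
  exact rpow_le_rpow_of_exponent_le one_le_two (logb_mem_Icc_of_abs_rate_sub_le hn h).2

end Typicality

lemma sum_indicator_tripleTypicalSet_le {A Y : Type*} [Fintype A] [Fintype Y]
    {W : Sign × A → Y → ℝ} (hW0 : ∀ x y, 0 ≤ W x y) {p : A → ℝ} (hp0 : ∀ a, 0 ≤ p a)
    {n : ℕ} (hn : 0 < n) (ε : ℝ) (y : Fin n → Y) :
    ∑ a : Fin n → A, ∑ s : Fin n → Sign,
        (if (a, s, y) ∈ tripleTypicalSet W p n ε then (1 : ℝ) else 0) ≤
      (2 : ℝ) ^ ((n : ℝ) * (ent (jointASY W p) + ε)) *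
        (2 : ℝ) ^ (-(n : ℝ) * (ent (outputPMF W p) - ε)) := by
  set c := (2 : ℝ) ^ ((n : ℝ) * (ent (jointASY W p) + ε))
  by_cases hy : ∃ a s, (a, s, y) ∈ tripleTypicalSet W p n ε
  swap
  · push Not at hy
    simp only [hy, if_false, Finset.sum_const_zero]
    positivity
  obtain ⟨_, _, -, -, hy_pos, -, -, -, hy_rate, -⟩ := hy
  have hpy := le_two_rpow_of_abs_rate_sub_le hn hy_pos hy_rate
  have hindicator : ∀ a s, (if (a, s, y) ∈ tripleTypicalSet W p n ε then (1 : ℝ) else 0) ≤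
      c * seqProb (jointASY W p) (fun i => (a i, s i, y i)) := by
    intro a s
    split_ifs with hmem
    · obtain ⟨-, -, -, hq_pos, -, -, -, hq_rate⟩ := hmem
      have hlow := two_rpow_le_of_abs_rate_sub_le hn hq_pos hq_rate
      rw [neg_mul, rpow_neg two_pos.le, inv_le_iff_one_le_mul₀' (by positivity)] at hlow
      exact hlow
    · exact mul_nonneg (by positivity) (Finset.prod_nonneg fun i _ =>
        mul_nonneg (mul_nonneg (hp0 _) (by norm_num)) (hW0 _ _))
  calc _ ≤ ∑ a : Fin n → A, ∑ s : Fin n → Sign,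
          c * seqProb (jointASY W p) (fun i => (a i, s i, y i)) :=
        Finset.sum_le_sum fun a _ => Finset.sum_le_sum fun s _ => hindicator a s
    _ = c * seqProb (outputPMF W p) y := by
        simp only [← Finset.mul_sum, sum_sum_seqProb_jointASY]
    _ ≤ _ := mul_le_mul_of_nonneg_left hpy (by positivity)

section Averaging

variable {ι : Type*} [Fintype ι]

lemma sum_mul_le_of_sum_le_one {w f : ι → ℝ} {D : ℝ} (hw0 : ∀ i, 0 ≤ w i)
    (hw1 : ∑ i, w i ≤ 1) (hf : ∀ i, f i ≤ D) (hD : 0 ≤ D) : ∑ i, w i * f i ≤ D :=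
  calc ∑ i, w i * f i ≤ ∑ i, w i * D :=
        Finset.sum_le_sum fun i _ => mul_le_mul_of_nonneg_left (hf i) (hw0 i)
    _ = (∑ i, w i) * D := Finset.sum_mul _ _ _ |>.symm
    _ ≤ D := mul_le_of_le_one_left hD hw1

lemma sum_ite_mem_one_div_ncard_le_one (S : Set ι) :
    ∑ i, (if i ∈ S then 1 / (S.ncard : ℝ) else 0) ≤ 1 := by
  rw [← Finset.sum_filter, Finset.sum_const, nsmul_eq_mul, mul_one_div,
    Set.ncard_eq_toFinset_card', Set.filter_mem_univ_eq_toFinset]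
  exact div_self_le_one _

lemma sum_ite_mul_le_sum (P : ι → Prop) [DecidablePred P] {f : ι → ℝ} (hf : ∀ i, 0 ≤ f i) :
    ∑ i, (if P i then 1 else 0) * f i ≤ ∑ i, f i :=
  Finset.sum_le_sum fun i _ => by split_ifs <;> simp [hf i]

lemma sum_prod_eq_one {β : Type*} [Fintype β] [DecidableEq ι] (K : ι → β → ℝ)
    (hK : ∀ i, ∑ b, K i b = 1) : ∑ y : ι → β, ∏ i, K i (y i) = 1 := by
  simp [← Fintype.prod_sum, hK]

end Averaging

lemma sum_two_rpow_neg_card (n : ℕ) : ∑ _s : Fin n → Sign, (2 : ℝ) ^ (-(n : ℝ)) = 1 := by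
  rw [Finset.sum_const, Finset.card_univ, Fintype.card_fun, Fintype.card_fin,
    card_sign, nsmul_eq_mul, rpow_neg two_pos.le, rpow_natCast]
  push_cast
  exact mul_inv_cancel₀ (by positivity)

/-- **Second error event bound in the proof of Theorem 1**: for every `ε > 0` there is
`N` such that for all `n ≥ N`, the average (over a uniformly random sign codebook)
probability that some other codeword is jointly typical with the channel output is at
most `2^{n(H(A) - I(X;Y) + 10ε)}`, where the amplitude codebook is the B-typical set
`𝔅 = B^n_{(S,Y),ε}(A)`. -/
theorem second_error_event_bound_SMD
    (W : Sign × A → Y → ℝ) (hW0 : ∀ x y, 0 ≤ W x y) (hW1 : ∀ x, ∑ y, W x y = 1)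
    (p : A → ℝ) (hp0 : ∀ a, 0 ≤ p a) (hp1 : ∑ a, p a = 1)
    (ε : ℝ) (hε : 0 < ε) :
    ∃ N : ℕ, ∀ n : ℕ, N ≤ n →
      (∑ a : Fin n → A,
        (if a ∈ BtypicalSet (pairASY W p) n ε then
          (1 / ((BtypicalSet (pairASY W p) n ε).ncard : ℝ)) else 0) *
        ∑ s : Fin n → Sign, (2 : ℝ) ^ (-(n : ℝ)) *
          ∑ y : Fin n → Y, (∏ i, W (s i, a i) (y i)) *
            ∑ a' : Fin n → A,
              (if a' ∈ BtypicalSet (pairASY W p) n ε ∧ a' ≠ a then 1 else 0) *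
              ∑ s' : Fin n → Sign, (2 : ℝ) ^ (-(n : ℝ)) *
                (if (a', s', y) ∈ tripleTypicalSet W p n ε then 1 else 0)) ≤
      (2 : ℝ) ^ ((n : ℝ) * (ent p - mutualInfo W p + 10 * ε)) := by
  refine ⟨1, fun n hn => ?_⟩
  set D := (2 : ℝ) ^ (-(n : ℝ)) * ((2 : ℝ) ^ ((n : ℝ) * (ent (jointASY W p) + ε)) *
    (2 : ℝ) ^ (-(n : ℝ) * (ent (outputPMF W p) - ε)))
  have hD : 0 ≤ D := by positivity
  have hother : ∀ a y, ∑ a' : Fin n → A,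
      (if a' ∈ BtypicalSet (pairASY W p) n ε ∧ a' ≠ a then 1 else 0) *
        ∑ s' : Fin n → Sign, (2 : ℝ) ^ (-(n : ℝ)) *
          (if (a', s', y) ∈ tripleTypicalSet W p n ε then 1 else 0) ≤ D := fun a y =>
    calc _ ≤ ∑ a' : Fin n → A, ∑ s' : Fin n → Sign, (2 : ℝ) ^ (-(n : ℝ)) *
          (if (a', s', y) ∈ tripleTypicalSet W p n ε then 1 else 0) :=
        sum_ite_mul_le_sum _ fun a' => Finset.sum_nonneg fun s' _ => by positivity
      _ ≤ D := by
        simp only [← Finset.mul_sum]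
        exact mul_le_mul_of_nonneg_left (sum_indicator_tripleTypicalSet_le hW0 hp0 hn ε y)
          (by positivity)
  calc _ ≤ D :=
        sum_mul_le_of_sum_le_one (fun a => by positivity)
          (sum_ite_mem_one_div_ncard_le_one _) (fun a =>
          sum_mul_le_of_sum_le_one (fun s => by positivity) (sum_two_rpow_neg_card n).le
            (fun s => sum_mul_le_of_sum_le_one
              (fun y => Finset.prod_nonneg fun i _ => hW0 _ _)
              (sum_prod_eq_one _ fun i => hW1 _).le (hother a) hD) hD) hD
    _ ≤ _ := by
        simp only [D, ← rpow_add two_pos, mutualInfo_eq hW0 hW1 hp0 hp1]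
        apply rpow_le_rpow_of_exponent_le one_le_two
        nlinarith [mul_pos (Nat.cast_pos.mpr hn : (0 : ℝ) < n) hε]
end
end
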